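/- Let ψ : ℝ^d → [0,1] be measurable with ∫ ψ(z) p(z) dz = s, where p is the standard Gaussian density on ℝ^d. Then for any unit vector u ∈ ℝ^d, ∫ ψ(z)(u·z)p(z) dz ≤ ∫ 1{u·z ≥ -Φ⁻¹(s)}(u·z)p(z) dz = φ(Φ⁻¹(s)). -/

import Mathlib

/-!
The measure `p(z) dz` is Mathlib's `stdGaussian`: both have characteristic function
`exp (-‖t‖² / 2)`. Being Gaussian with identity covariance, it pushes forward to `N(0, 1)`
under `z ↦ u·z` for every unit vector `u`. With `c = Φ⁻¹(s)`, the half-space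
`A = {u·z ≥ -c}` therefore has mass `Φ(c) = s`, and `∫_A (u·z) p(z) dz = φ(c)`
because `-φ'(t) = t φ(t)`. Finally, for `0 ≤ ψ ≤ 1` and `g = u·z` the pointwise inequality
`ψ (g + c) ≤ 1_A (g + c)` integrates to the claimed bound, the constant terms cancelling
since `∫ ψ p = s = P(A)`.
-/

open MeasureTheory

/-- Standard normal pdf `φ`. -/
noncomputable def stdnpdf (t : ℝ) : ℝ := (Real.sqrt (2 * Real.pi))⁻¹ * Real.exp (-t ^ 2 / 2)

/-- Standard normal cdf `Φ`. -/
noncomputable def stdncdf (t : ℝ) : ℝ := ∫ s in Set.Iic t, stdnpdf s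

/-- Inverse of the standard normal cdf, `Φ⁻¹ : (0,1) → ℝ`. -/
noncomputable def stdninv : ℝ → ℝ := Function.invFun stdncdf

/-- Density of the standard Gaussian `N(0, I_d)` on `ℝ^d`. -/
noncomputable def gpdf (d : ℕ) (z : EuclideanSpace ℝ (Fin d)) : ℝ :=
  (2 * Real.pi) ^ (-(d : ℝ) / 2) * Real.exp (-‖z‖ ^ 2 / 2)

open Set Filter ProbabilityTheory

theorem integral_mul_le_setIntegral_of_integral_eq_measureReal {α : Type*} [MeasurableSpace α]
    {μ : Measure α} [IsFiniteMeasure μ] {ψ g : α → ℝ} (hψ : AEStronglyMeasurable ψ μ)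
    (hψ01 : ∀ x, ψ x ∈ Icc (0 : ℝ) 1) (hg : Integrable g μ) (hgm : Measurable g) (t : ℝ)
    (hmass : ∫ x, ψ x ∂μ = μ.real {x | t ≤ g x}) :
    ∫ x, ψ x * g x ∂μ ≤ ∫ x in {x | t ≤ g x}, g x ∂μ := by
  set A := {x | t ≤ g x}
  have hA : MeasurableSet A := measurableSet_le measurable_const hgm
  have hψ_bdd : ∀ᵐ x ∂μ, ‖ψ x‖ ≤ 1 := ae_of_all _ fun x => by
    rw [Real.norm_of_nonneg (hψ01 x).1]; exact (hψ01 x).2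
  have hψ_int : Integrable ψ μ := (integrable_const (1 : ℝ)).mono' hψ hψ_bdd
  have hψg_int : Integrable (fun x => ψ x * g x) μ := hg.bdd_mul hψ hψ_bdd
  have hpoint : ∀ x, ψ x * g x - t * ψ x ≤ A.indicator (fun x => g x - t) x := by
    intro x
    by_cases hx : x ∈ A
    · rw [indicator_of_mem hx]
      have : 0 ≤ g x - t := sub_nonneg.mpr hx
      nlinarith [(hψ01 x).2]
    · rw [indicator_of_notMem hx]
      have : g x - t < 0 := sub_neg.mpr (not_le.mp hx)
      nlinarith [(hψ01 x).1]
  have key := calc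
    ∫ x, ψ x * g x ∂μ - t * ∫ x, ψ x ∂μ = ∫ x, (ψ x * g x - t * ψ x) ∂μ := by
      rw [integral_sub hψg_int (hψ_int.const_mul t), integral_const_mul]
    _ ≤ ∫ x, A.indicator (fun x => g x - t) x ∂μ :=
      integral_mono (hψg_int.sub (hψ_int.const_mul t))
        ((hg.sub (integrable_const t)).indicator hA) hpoint
    _ = ∫ x in A, g x ∂μ - t * μ.real A := by
      rw [integral_indicator hA, integral_sub hg.integrableOn (integrable_const t).integrableOn,
        setIntegral_const, smul_eq_mul, mul_comm]
  rw [hmass] at key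
  linarith

section StdNormal

lemma stdnpdf_eq_gaussianPDFReal : stdnpdf = gaussianPDFReal 0 1 := by
  funext t
  simp [stdnpdf, gaussianPDFReal]

lemma measureReal_gaussianReal_Iic (c : ℝ) : (gaussianReal 0 1).real (Iic c) = stdncdf c := by
  rw [measureReal_def, gaussianReal_apply_eq_integral 0 one_ne_zero, ENNReal.toReal_ofReal
    (integral_nonneg fun t => gaussianPDFReal_nonneg 0 1 t), stdncdf, stdnpdf_eq_gaussianPDFReal]

lemma cdf_gaussianReal_zero_one : cdf (gaussianReal 0 1) = stdncdf :=
  funext fun c => by rw [cdf_eq_real, measureReal_gaussianReal_Iic]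

lemma continuous_stdncdf : Continuous stdncdf := by
  have hint : Integrable stdnpdf := by
    rw [stdnpdf_eq_gaussianPDFReal]; exact integrable_gaussianPDFReal 0 1
  have hprim : stdncdf = fun t => stdncdf 0 + ∫ x in (0 : ℝ)..t, stdnpdf x := by
    funext t
    rw [stdncdf, stdncdf, intervalIntegral.integral_Iic_sub_Iic hint.integrableOn
      hint.integrableOn |>.symm, add_sub_cancel]
  rw [hprim]
  exact continuous_const.add (hint.continuous_primitive 0)

lemma stdncdf_stdninv {s : ℝ} (hs : s ∈ Ioo (0 : ℝ) 1) : stdncdf (stdninv s) = s := by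
  have hbot := cdf_gaussianReal_zero_one ▸ tendsto_cdf_atBot (μ := gaussianReal 0 1)
  have htop := cdf_gaussianReal_zero_one ▸ tendsto_cdf_atTop (μ := gaussianReal 0 1)
  refine Function.invFun_eq (mem_range_of_exists_le_of_exists_ge continuous_stdncdf ?_ ?_)
  · exact (hbot.eventually (eventually_le_nhds hs.1)).exists
  · exact (htop.eventually (eventually_ge_nhds hs.2)).exists

lemma measureReal_gaussianReal_Ici_neg (c : ℝ) :
    (gaussianReal 0 1).real (Ici (-c)) = stdncdf c := by
  have hsymm : (gaussianReal 0 1).map (fun x => -x) = gaussianReal 0 1 := by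
    simpa using gaussianReal_map_neg (μ := 0) (v := 1)
  rw [← measureReal_gaussianReal_Iic, ← hsymm, map_measureReal_apply measurable_neg
    measurableSet_Iic]
  congr 1
  ext t
  simp

lemma hasDerivAt_stdnpdf (t : ℝ) : HasDerivAt stdnpdf (-t * stdnpdf t) t := by
  have h : HasDerivAt (fun x : ℝ => -x ^ 2 / 2) (-t) t :=
    ((hasDerivAt_pow 2 t).neg.div_const 2).congr_deriv (by push_cast; ring)
  exact (h.exp.const_mul (Real.sqrt (2 * Real.pi))⁻¹).congr_deriv (by rw [stdnpdf]; ring)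

lemma tendsto_stdnpdf_atTop : Tendsto stdnpdf atTop (nhds 0) := by
  have h : Tendsto (fun t : ℝ => t ^ 2 / 2) atTop atTop :=
    (tendsto_pow_atTop two_ne_zero).atTop_div_const two_pos
  convert (Real.tendsto_exp_neg_atTop_nhds_zero.comp h).const_mul (Real.sqrt (2 * Real.pi))⁻¹
    using 1
  · funext t; simp [stdnpdf, neg_div]
  · rw [mul_zero]

lemma integrable_mul_stdnpdf : Integrable fun t => t * stdnpdf t := by
  have h := (integrable_mul_exp_neg_mul_sq (b := 1 / 2) (by norm_num)).const_mul
    (Real.sqrt (2 * Real.pi))⁻¹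
  refine h.congr (ae_of_all _ fun t => ?_)
  simp only [stdnpdf, neg_mul, neg_div]
  ring_nf

lemma setIntegral_gaussianReal_Ici_neg (c : ℝ) :
    ∫ t in Ici (-c), t ∂gaussianReal 0 1 = stdnpdf c := by
  rw [gaussianReal_of_var_ne_zero 0 one_ne_zero,
    setIntegral_withDensity_eq_setIntegral_toReal_smul₀ (measurable_gaussianPDF 0 1).aemeasurable
      (ae_of_all _ fun _ => gaussianPDF_lt_top) _ measurableSet_Ici]
  simp_rw [toReal_gaussianPDF, ← stdnpdf_eq_gaussianPDFReal, smul_eq_mul, mul_comm (stdnpdf _)]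
  rw [integral_Ici_eq_integral_Ioi, integral_Ioi_of_hasDerivAt_of_tendsto'
    (f := fun t => -stdnpdf t) (fun t _ => (hasDerivAt_stdnpdf t).neg.congr_deriv (by ring))
    integrable_mul_stdnpdf.integrableOn (by simpa using tendsto_stdnpdf_atTop.neg)]
  simp [stdnpdf]

end StdNormal

section GaussianDensity

open Complex
variable {d : ℕ}

lemma gpdf_nonneg (z : EuclideanSpace ℝ (Fin d)) : 0 ≤ gpdf d z := by
  unfold gpdf; positivity

@[fun_prop]
lemma continuous_gpdf : Continuous (gpdf d) := by
  unfold gpdf; fun_prop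

lemma integral_withDensity_gpdf {F : Type*} [NormedAddCommGroup F] [NormedSpace ℝ F]
    (f : EuclideanSpace ℝ (Fin d) → F) :
    ∫ z, f z ∂volume.withDensity (fun z => ENNReal.ofReal (gpdf d z)) = ∫ z, gpdf d z • f z := by
  rw [integral_withDensity_eq_integral_toReal_smul (by fun_prop)
    (ae_of_all _ fun _ => ENNReal.ofReal_lt_top)]
  simp_rw [ENNReal.toReal_ofReal (gpdf_nonneg _)]

lemma integral_gpdf_smul_cexp_inner (t : EuclideanSpace ℝ (Fin d)) :
    ∫ z, gpdf d z • cexp (inner ℝ z t * I) = cexp (-‖t‖ ^ 2 / 2) := by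
  have h2π : (0 : ℝ) < 2 * Real.pi := by positivity
  have hintegrand : ∀ z : EuclideanSpace ℝ (Fin d), gpdf d z • cexp (inner ℝ z t * I)
      = (((2 * Real.pi) ^ (-(d : ℝ) / 2) : ℝ) : ℂ)
        * cexp (-((1 / 2 : ℝ) : ℂ) * ‖z‖ ^ 2 + I * inner ℝ t z) := by
    intro z
    rw [gpdf, real_inner_comm, Complex.real_smul, ofReal_mul, ofReal_exp, mul_assoc,
      ← Complex.exp_add]
    push_cast
    ring_nf
  have hpow : ((Real.pi : ℂ) / ((1 / 2 : ℝ) : ℂ)) ^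
        ((Module.finrank ℝ (EuclideanSpace ℝ (Fin d)) : ℂ) / 2)
      = (((2 * Real.pi) ^ ((d : ℝ) / 2) : ℝ) : ℂ) := by
    rw [ofReal_cpow h2π.le, finrank_euclideanSpace_fin]
    push_cast; ring_nf
  simp_rw [hintegrand]
  rw [integral_const_mul, GaussianFourier.integral_cexp_neg_mul_sq_norm_add
    (by norm_num) I t, hpow, ← mul_assoc, ← ofReal_mul, ← Real.rpow_add h2π]
  rw [show -(d : ℝ) / 2 + d / 2 = 0 by ring, Real.rpow_zero, ofReal_one, one_mul, I_sq]
  congr 1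
  push_cast
  ring

lemma integral_gpdf : ∫ z, gpdf d z = 1 := by
  have h := integral_gpdf_smul_cexp_inner (d := d) 0
  simp only [inner_zero_right, ofReal_zero, zero_mul, Complex.exp_zero, norm_zero] at h
  norm_num [integral_complex_ofReal] at h
  exact_mod_cast h

lemma integrable_gpdf : Integrable (gpdf d) :=
  .of_integral_ne_zero (by rw [integral_gpdf]; exact one_ne_zero)

lemma withDensity_gpdf_eq_stdGaussian :
    volume.withDensity (fun z => ENNReal.ofReal (gpdf d z)) = stdGaussian _ := by
  have := isFiniteMeasure_withDensity_ofReal (integrable_gpdf (d := d)).hasFiniteIntegral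
  refine Measure.ext_of_charFun (funext fun t => ?_)
  rw [charFun_apply, integral_withDensity_gpdf, integral_gpdf_smul_cexp_inner, charFun_stdGaussian]

lemma integral_mul_gpdf (f : EuclideanSpace ℝ (Fin d) → ℝ) :
    ∫ z, f z * gpdf d z = ∫ z, f z ∂stdGaussian (EuclideanSpace ℝ (Fin d)) := by
  rw [← withDensity_gpdf_eq_stdGaussian, integral_withDensity_gpdf]
  simp_rw [smul_eq_mul, mul_comm]

end GaussianDensity

lemma stdGaussian_map_inner {E : Type*} [NormedAddCommGroup E] [InnerProductSpace ℝ E]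
    [FiniteDimensional ℝ E] [MeasurableSpace E] [BorelSpace E] {u : E} (hu : ‖u‖ = 1) :
    (stdGaussian E).map (fun z => inner ℝ u z) = gaussianReal 0 1 := by
  have h := IsGaussian.map_eq_gaussianReal (μ := stdGaussian E) (innerSL ℝ u)
  rw [integral_strongDual_stdGaussian, variance_dual_stdGaussian, innerSL_apply_norm, hu] at h
  simpa using h

/-- if `∫ ψ(z) p(z) dz = s`, then for any unit vector `u`,
`∫ ψ(z)(u·z)p(z) dz ≤ ∫ 1{u·z ≥ -Φ⁻¹(s)}(u·z)p(z) dz = φ(Φ⁻¹(s))`. -/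
theorem stmt_5 (d : ℕ) (ψ : EuclideanSpace ℝ (Fin d) → ℝ) (hmeas : Measurable ψ)
    (hrange : ∀ z, ψ z ∈ Set.Icc (0:ℝ) 1) (s : ℝ) (hs : s ∈ Set.Ioo (0:ℝ) 1)
    (hint : ∫ z, ψ z * gpdf d z = s)
    (u : EuclideanSpace ℝ (Fin d)) (hu : ‖u‖ = 1) :
    (∫ z, ψ z * (inner ℝ u z : ℝ) * gpdf d z) ≤
      (∫ z, Set.indicator {w : EuclideanSpace ℝ (Fin d) | -stdninv s ≤ (inner ℝ u w : ℝ)}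
        (fun w => (inner ℝ u w : ℝ)) z * gpdf d z) ∧
    (∫ z, Set.indicator {w : EuclideanSpace ℝ (Fin d) | -stdninv s ≤ (inner ℝ u w : ℝ)}
        (fun w => (inner ℝ u w : ℝ)) z * gpdf d z) = stdnpdf (stdninv s) := by
  set μ := stdGaussian (EuclideanSpace ℝ (Fin d))
  set c := stdninv s
  have hinner : Measurable fun z : EuclideanSpace ℝ (Fin d) => inner ℝ u z := by fun_prop
  have hlaw := stdGaussian_map_inner hu
  have hmass : μ.real {w | -c ≤ inner ℝ u w} = s := calc
    _ = (μ.map fun z => inner ℝ u z).real (Ici (-c)) :=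
      (map_measureReal_apply hinner measurableSet_Ici).symm
    _ = s := by rw [hlaw, measureReal_gaussianReal_Ici_neg, stdncdf_stdninv hs]
  have hupper : ∫ z in {w | -c ≤ inner ℝ u w}, inner ℝ u z ∂μ = stdnpdf c := calc
    _ = ∫ t in Ici (-c), t ∂(μ.map fun z => inner ℝ u z) :=
      (setIntegral_map measurableSet_Ici (by fun_prop) hinner.aemeasurable).symm
    _ = stdnpdf c := by rw [hlaw, setIntegral_gaussianReal_Ici_neg]
  rw [integral_mul_gpdf ψ] at hint
  rw [integral_mul_gpdf (fun z => ψ z * inner ℝ u z), integral_mul_gpdf,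
    integral_indicator (measurableSet_le measurable_const hinner)]
  exact ⟨integral_mul_le_setIntegral_of_integral_eq_measureReal hmeas.aestronglyMeasurable hrange
    (by simpa using IsGaussian.integrable_dual μ (innerSL ℝ u)) hinner _ (hint.trans hmass.symm),
    hupper⟩
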